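/- arXiv:2103.07657 — 5 statements merged into one kernel-verified Lean document; each statement's English description precedes it below -/
import Mathlib

section
/- Let (A, μ, ι) be an algebra in a monoidal category C, with a morphism ε : A → 𝟙 satisfying ε ∘ ι = id_𝟙 and a morphism i : 𝟙 → A ⊗ A such that A is rigid and self-dual with evaluation ε ∘ μ and coevaluation i (the two zig-zag composites equal id_A). Let (X1, μ_{X1}) and (X2, μ_{X2}) be left A-modules and let σ : X2 → X1 be any morphism in C. Define S : X2 → X1 as the composite S = μ_{X1} ∘ (id_A ⊗ σ) ∘ (id_A ⊗ μ_{X2}) ∘ α⁻¹_{A,A,X2} ∘ (i ⊗ id_{X2}) ∘ λ⁻¹_{X2}. Then S is a morphism of left A-modules, i.e. μ_{X1} ∘ (id_A ⊗ S) = S ∘ μ_{X2}. -/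
/-!
The pairing `μ ≫ ε` is invariant, `ε((ab)c) = ε(a(bc))`, so transposing along the exact pairing
it defines shows that the coevaluation `i = Σ i₁ ⊗ i₂` is balanced: `Σ a i₁ ⊗ i₂ = Σ i₁ ⊗ i₂ a`.
Hence `a • S x = Σ a i₁ • σ (i₂ • x) = Σ i₁ • σ (i₂ a • x) = S (a • x)`.
-/

open CategoryTheory MonoidalCategory

namespace CategoryTheory

variable {C : Type*} [Category C] [MonoidalCategory C]

/-- If `ψ` is the transpose of `φ` under the evaluation, the coevaluation intertwines them:
`(φ ⊗ 1) ∘ (1 ⊗ η) = (1 ⊗ ψ) ∘ (η ⊗ 1)`. Both sides are images of `φ` under the bijection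
`tensorRightHomEquiv`, the right one by the zig-zag identity. -/
theorem tensorRightHomEquiv_eq_tensorLeftHomEquiv {X Y Z : C} [ExactPairing X Y]
    (φ : Z ⊗ X ⟶ X) (ψ : Y ⊗ Z ⟶ Y)
    (h : ψ ▷ X ≫ ε_ X Y = (α_ Y Z X).hom ≫ Y ◁ φ ≫ ε_ X Y) :
    tensorRightHomEquiv Z X Y X φ = tensorLeftHomEquiv Z X Y Y ψ := by
  rw [eq_comm, ← Equiv.symm_apply_eq]
  dsimp [tensorRightHomEquiv, tensorLeftHomEquiv]
  calc ((λ_ Z).inv ≫ η_ X Y ▷ Z ≫ (α_ X Y Z).hom ≫ X ◁ ψ) ▷ X ≫ (α_ X Y X).hom ≫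
        X ◁ ε_ X Y ≫ (ρ_ X).hom
      = 𝟙 _ ⊗≫ η_ X Y ▷ (Z ⊗ X) ⊗≫ X ◁ (ψ ▷ X ≫ ε_ X Y) ⊗≫ 𝟙 _ := by monoidal
    _ = 𝟙 _ ⊗≫ (η_ X Y ▷ (Z ⊗ X) ≫ (X ⊗ Y) ◁ φ) ⊗≫ X ◁ ε_ X Y ⊗≫ 𝟙 _ := by
        rw [h]; monoidal
    _ = 𝟙 _ ⊗≫ (𝟙_ C ◁ φ ≫ η_ X Y ▷ X) ⊗≫ X ◁ ε_ X Y ⊗≫ 𝟙 _ := by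
        rw [← whisker_exchange]
    _ = φ ≫ 𝟙 _ ⊗≫ (η_ X Y ▷ X ≫ (α_ X Y X).hom ≫ X ◁ ε_ X Y) ⊗≫ 𝟙 _ := by monoidal
    _ = φ := by rw [ExactPairing.evaluation_coevaluation]; monoidal

variable {A X1 X2 : C}

/-- The average of `σ : X2 ⟶ X1` over `i : 𝟙 ⟶ A ⊗ A`, i.e. `x ↦ i₁ • σ (i₂ • x)`. -/
def averagedHom (i : 𝟙_ C ⟶ A ⊗ A) (a1 : A ⊗ X1 ⟶ X1) (a2 : A ⊗ X2 ⟶ X2)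
    (σ : X2 ⟶ X1) : X2 ⟶ X1 :=
  (λ_ X2).inv ≫ i ▷ X2 ≫ (α_ A A X2).hom ≫ A ◁ a2 ≫ A ◁ σ ≫ a1

theorem whiskerLeft_averagedHom_comp (μ : A ⊗ A ⟶ A) (i : 𝟙_ C ⟶ A ⊗ A)
    (hi : (ρ_ A).inv ≫ A ◁ i ≫ (α_ A A A).inv ≫ μ ▷ A =
      (λ_ A).inv ≫ i ▷ A ≫ (α_ A A A).hom ≫ A ◁ μ)
    (a1 : A ⊗ X1 ⟶ X1) (a2 : A ⊗ X2 ⟶ X2)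
    (assoc1 : A ◁ a1 ≫ a1 = (α_ A A X1).inv ≫ μ ▷ X1 ≫ a1)
    (assoc2 : μ ▷ X2 ≫ a2 = (α_ A A X2).hom ≫ A ◁ a2 ≫ a2) (σ : X2 ⟶ X1) :
    A ◁ averagedHom i a1 a2 σ ≫ a1 = a2 ≫ averagedHom i a1 a2 σ := by
  unfold averagedHom
  calc A ◁ ((λ_ X2).inv ≫ i ▷ X2 ≫ (α_ A A X2).hom ≫ A ◁ a2 ≫ A ◁ σ ≫ a1) ≫ a1
      = 𝟙 _ ⊗≫ A ◁ (i ▷ X2) ⊗≫ ((A ⊗ A) ◁ (a2 ≫ σ) ≫ μ ▷ X1) ⊗≫ a1 := by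
        simp only [MonoidalCategory.whiskerLeft_comp, Category.assoc, assoc1]
        monoidal
    _ = 𝟙 _ ⊗≫ A ◁ (i ▷ X2) ⊗≫ (μ ▷ (A ⊗ X2) ≫ A ◁ (a2 ≫ σ)) ⊗≫ a1 := by
        rw [whisker_exchange]
    _ = ((ρ_ A).inv ≫ A ◁ i ≫ (α_ A A A).inv ≫ μ ▷ A) ▷ X2 ≫ (α_ A A X2).hom ≫
          A ◁ a2 ≫ A ◁ σ ≫ a1 := by
        monoidal
    _ = 𝟙 _ ⊗≫ i ▷ (A ⊗ X2) ⊗≫ A ◁ (μ ▷ X2 ≫ a2) ⊗≫ (A ◁ σ ≫ a1) := by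
        rw [hi]; monoidal
    _ = 𝟙 _ ⊗≫ (i ▷ (A ⊗ X2) ≫ (A ⊗ A) ◁ a2) ⊗≫ (A ◁ a2 ≫ A ◁ σ ≫ a1) := by
        rw [assoc2]; monoidal
    _ = 𝟙 _ ⊗≫ (𝟙_ C ◁ a2 ≫ i ▷ X2) ⊗≫ (A ◁ a2 ≫ A ◁ σ ≫ a1) := by
        rw [← whisker_exchange]
    _ = a2 ≫ ((λ_ X2).inv ≫ i ▷ X2 ≫ (α_ A A X2).hom ≫ A ◁ a2 ≫ A ◁ σ ≫ a1) := by
        monoidal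

end CategoryTheory

theorem statement1_general {C : Type*} [Category C] [MonoidalCategory C]
    (A : C) (μ : A ⊗ A ⟶ A)
    (assoc : (𝟙 A ⊗ₘ μ) ≫ μ = (α_ A A A).inv ≫ (μ ⊗ₘ 𝟙 A) ≫ μ)
    (ε : A ⟶ 𝟙_ C)
    (i : 𝟙_ C ⟶ A ⊗ A)
    (zig1 : (λ_ A).inv ≫ (i ⊗ₘ 𝟙 A) ≫ (α_ A A A).hom ≫ (𝟙 A ⊗ₘ (μ ≫ ε)) ≫ (ρ_ A).hom = 𝟙 A)
    (zig2 : (ρ_ A).inv ≫ (𝟙 A ⊗ₘ i) ≫ (α_ A A A).inv ≫ ((μ ≫ ε) ⊗ₘ 𝟙 A) ≫ (λ_ A).hom = 𝟙 A)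
    (X1 X2 : C) (a1 : A ⊗ X1 ⟶ X1) (a2 : A ⊗ X2 ⟶ X2)
    (assoc1 : (𝟙 A ⊗ₘ a1) ≫ a1 = (α_ A A X1).inv ≫ (μ ⊗ₘ 𝟙 X1) ≫ a1)
    (assoc2 : (𝟙 A ⊗ₘ a2) ≫ a2 = (α_ A A X2).inv ≫ (μ ⊗ₘ 𝟙 X2) ≫ a2)
    (σ : X2 ⟶ X1)
    (S : X2 ⟶ X1)
    (hS : S = (λ_ X2).inv ≫ (i ⊗ₘ 𝟙 X2) ≫ (α_ A A X2).hom ≫ (𝟙 A ⊗ₘ a2) ≫ (𝟙 A ⊗ₘ σ) ≫ a1) :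
    (𝟙 A ⊗ₘ S) ≫ a1 = a2 ≫ S := by
  simp only [id_tensorHom, tensorHom_id] at zig1 zig2 assoc assoc1 assoc2 hS ⊢
  let _ : ExactPairing A A :=
    { coevaluation' := i
      evaluation' := μ ≫ ε
      coevaluation_evaluation' := by
        rw [← cancel_epi (ρ_ A).inv, ← cancel_mono (λ_ A).hom]; simpa using zig2
      evaluation_coevaluation' := by
        rw [← cancel_epi (λ_ A).inv, ← cancel_mono (ρ_ A).hom]; simpa using zig1 }
  have hμ : μ ▷ A ≫ μ = (α_ A A A).hom ≫ A ◁ μ ≫ μ := by simp [assoc]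
  have balanced := tensorRightHomEquiv_eq_tensorLeftHomEquiv (X := A) μ μ ((reassoc_of% hμ) ε)
  rw [hS]
  exact whiskerLeft_averagedHom_comp μ i balanced a1 a2 assoc1 (by simp [assoc2]) σ

/-- Given an algebra `(A, μ, ι)` rigid and self-dual with evaluation `ε ∘ μ`
and coevaluation `i`, left `A`-modules `(X1, a1)`, `(X2, a2)` and any morphism `σ : X2 ⟶ X1`
in `C`, the averaged morphism
`S = μ_{X1} ∘ (id_A ⊗ σ) ∘ (id_A ⊗ μ_{X2}) ∘ α⁻¹ ∘ (i ⊗ id_{X2}) ∘ λ⁻¹` is a morphism of left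
`A`-modules. -/
theorem statement1 {C : Type*} [Category C] [MonoidalCategory C]
    (A : C) (μ : A ⊗ A ⟶ A) (ι : 𝟙_ C ⟶ A)
    (unit_left : (ι ⊗ₘ 𝟙 A) ≫ μ = (λ_ A).hom)
    (unit_right : (𝟙 A ⊗ₘ ι) ≫ μ = (ρ_ A).hom)
    (assoc : (𝟙 A ⊗ₘ μ) ≫ μ = (α_ A A A).inv ≫ (μ ⊗ₘ 𝟙 A) ≫ μ)
    (ε : A ⟶ 𝟙_ C) (hει : ι ≫ ε = 𝟙 (𝟙_ C))
    (i : 𝟙_ C ⟶ A ⊗ A)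
    (zig1 : (λ_ A).inv ≫ (i ⊗ₘ 𝟙 A) ≫ (α_ A A A).hom ≫ (𝟙 A ⊗ₘ (μ ≫ ε)) ≫ (ρ_ A).hom = 𝟙 A)
    (zig2 : (ρ_ A).inv ≫ (𝟙 A ⊗ₘ i) ≫ (α_ A A A).inv ≫ ((μ ≫ ε) ⊗ₘ 𝟙 A) ≫ (λ_ A).hom = 𝟙 A)
    (X1 X2 : C) (a1 : A ⊗ X1 ⟶ X1) (a2 : A ⊗ X2 ⟶ X2)
    (unit1 : (ι ⊗ₘ 𝟙 X1) ≫ a1 = (λ_ X1).hom)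
    (assoc1 : (𝟙 A ⊗ₘ a1) ≫ a1 = (α_ A A X1).inv ≫ (μ ⊗ₘ 𝟙 X1) ≫ a1)
    (unit2 : (ι ⊗ₘ 𝟙 X2) ≫ a2 = (λ_ X2).hom)
    (assoc2 : (𝟙 A ⊗ₘ a2) ≫ a2 = (α_ A A X2).inv ≫ (μ ⊗ₘ 𝟙 X2) ≫ a2)
    (σ : X2 ⟶ X1)
    (S : X2 ⟶ X1)
    (hS : S = (λ_ X2).inv ≫ (i ⊗ₘ 𝟙 X2) ≫ (α_ A A X2).hom ≫ (𝟙 A ⊗ₘ a2) ≫ (𝟙 A ⊗ₘ σ) ≫ a1) :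
    (𝟙 A ⊗ₘ S) ≫ a1 = a2 ≫ S :=
  statement1_general A μ assoc ε i zig1 zig2 X1 X2 a1 a2 assoc1 assoc2 σ S hS
end

section
/- Let C be an F-linear monoidal category over a field F and (A, μ, ι) an algebra in C. Suppose i : 𝟙 → A ⊗ A is a morphism satisfying μ ∘ i = c · ι for a scalar c ∈ F. Let (X1, μ_{X1}) and (X2, μ_{X2}) be left A-modules, let f : X1 → X2 be a morphism of left A-modules, and let σ : X2 → X1 be a morphism in C with f ∘ σ = id_{X2}. Define S : X2 → X1 as the composite S = μ_{X1} ∘ (id_A ⊗ σ) ∘ (id_A ⊗ μ_{X2}) ∘ α⁻¹_{A,A,X2} ∘ (i ⊗ id_{X2}) ∘ λ⁻¹_{X2}. Then f ∘ S = c · id_{X2}. -/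
/-! Because `f` is `A`-linear and `σ` splits it, `S ≫ f` collapses to `i` acting on `X2` twice;
associativity of the action turns this into the action of `μ ∘ i = c • ι`, which is `c` times the
identity by the unit law. -/

open CategoryTheory MonoidalCategory

section

variable {C : Type*} [Category C] [MonoidalCategory C] {A : C}

lemma id_tensorHom_section_comp_action_comp {X1 X2 : C} {a1 : A ⊗ X1 ⟶ X1}
    {a2 : A ⊗ X2 ⟶ X2} {f : X1 ⟶ X2} (hf : a1 ≫ f = (𝟙 A ⊗ₘ f) ≫ a2) {σ : X2 ⟶ X1}
    (hσ : σ ≫ f = 𝟙 X2) :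
    (𝟙 A ⊗ₘ σ) ≫ a1 ≫ f = a2 := by
  rw [hf, ← Category.assoc, tensorHom_comp_tensorHom, hσ, Category.comp_id, id_tensorHom_id,
    Category.id_comp]

lemma tensorHom_id_comp_associator_comp_action_comp_action {μ : A ⊗ A ⟶ A} {X : C}
    {a : A ⊗ X ⟶ X} (assoc : (𝟙 A ⊗ₘ a) ≫ a = (α_ A A X).inv ≫ (μ ⊗ₘ 𝟙 X) ≫ a)
    (i : 𝟙_ C ⟶ A ⊗ A) :
    (i ⊗ₘ 𝟙 X) ≫ (α_ A A X).hom ≫ (𝟙 A ⊗ₘ a) ≫ a = ((i ≫ μ) ⊗ₘ 𝟙 X) ≫ a := by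
  rw [assoc, Iso.hom_inv_id_assoc, ← Category.assoc, tensorHom_comp_tensorHom, Category.comp_id]

lemma smul_tensorHom_id_comp_action {F : Type*} [Semiring F] [Preadditive C] [Linear F C]
    [MonoidalPreadditive C] [MonoidalLinear F C] {ι : 𝟙_ C ⟶ A} {X : C} {a : A ⊗ X ⟶ X}
    (unit : (ι ⊗ₘ 𝟙 X) ≫ a = (λ_ X).hom) (c : F) :
    ((c • ι) ⊗ₘ 𝟙 X) ≫ a = c • (λ_ X).hom := by
  rw [tensorHom_id, MonoidalLinear.smul_whiskerRight, Linear.smul_comp, ← tensorHom_id, unit]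

end

theorem statement2_general {F : Type*} [Field F] {C : Type*} [Category C] [Preadditive C]
    [CategoryTheory.Linear F C] [MonoidalCategory C] [MonoidalPreadditive C]
    [MonoidalLinear F C]
    (A : C) (μ : A ⊗ A ⟶ A) (ι : 𝟙_ C ⟶ A)
    (i : 𝟙_ C ⟶ A ⊗ A) (c : F) (hindex : i ≫ μ = c • ι)
    (X1 X2 : C) (a1 : A ⊗ X1 ⟶ X1) (a2 : A ⊗ X2 ⟶ X2)
    (unit2 : (ι ⊗ₘ 𝟙 X2) ≫ a2 = (λ_ X2).hom)
    (assoc2 : (𝟙 A ⊗ₘ a2) ≫ a2 = (α_ A A X2).inv ≫ (μ ⊗ₘ 𝟙 X2) ≫ a2)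
    (f : X1 ⟶ X2) (hf : a1 ≫ f = (𝟙 A ⊗ₘ f) ≫ a2)
    (σ : X2 ⟶ X1) (hσ : σ ≫ f = 𝟙 X2)
    (S : X2 ⟶ X1)
    (hS : S = (λ_ X2).inv ≫ (i ⊗ₘ 𝟙 X2) ≫ (α_ A A X2).hom ≫ (𝟙 A ⊗ₘ a2) ≫ (𝟙 A ⊗ₘ σ) ≫ a1) :
    S ≫ f = c • 𝟙 X2 := by
  subst hS
  simp only [Category.assoc, id_tensorHom_section_comp_action_comp hf hσ]
  rw [tensorHom_id_comp_associator_comp_action_comp_action assoc2, hindex,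
    smul_tensorHom_id_comp_action unit2, Linear.comp_smul, Iso.inv_hom_id]

/-- In an `F`-linear monoidal category, for an algebra `(A, μ, ι)` with
`μ ∘ i = c • ι`, left `A`-modules `X1, X2`, a module morphism `f : X1 ⟶ X2` and a morphism
`σ : X2 ⟶ X1` in `C` with `f ∘ σ = id`, the averaged morphism `S` satisfies
`f ∘ S = c • id_{X2}`. -/
theorem statement2 {F : Type*} [Field F] {C : Type*} [Category C] [Preadditive C]
    [CategoryTheory.Linear F C] [MonoidalCategory C] [MonoidalPreadditive C]
    [MonoidalLinear F C]
    (A : C) (μ : A ⊗ A ⟶ A) (ι : 𝟙_ C ⟶ A)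
    (unit_left : (ι ⊗ₘ 𝟙 A) ≫ μ = (λ_ A).hom)
    (unit_right : (𝟙 A ⊗ₘ ι) ≫ μ = (ρ_ A).hom)
    (assoc : (𝟙 A ⊗ₘ μ) ≫ μ = (α_ A A A).inv ≫ (μ ⊗ₘ 𝟙 A) ≫ μ)
    (i : 𝟙_ C ⟶ A ⊗ A) (c : F) (hindex : i ≫ μ = c • ι)
    (X1 X2 : C) (a1 : A ⊗ X1 ⟶ X1) (a2 : A ⊗ X2 ⟶ X2)
    (unit1 : (ι ⊗ₘ 𝟙 X1) ≫ a1 = (λ_ X1).hom)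
    (assoc1 : (𝟙 A ⊗ₘ a1) ≫ a1 = (α_ A A X1).inv ≫ (μ ⊗ₘ 𝟙 X1) ≫ a1)
    (unit2 : (ι ⊗ₘ 𝟙 X2) ≫ a2 = (λ_ X2).hom)
    (assoc2 : (𝟙 A ⊗ₘ a2) ≫ a2 = (α_ A A X2).inv ≫ (μ ⊗ₘ 𝟙 X2) ≫ a2)
    (f : X1 ⟶ X2) (hf : a1 ≫ f = (𝟙 A ⊗ₘ f) ≫ a2)
    (σ : X2 ⟶ X1) (hσ : σ ≫ f = 𝟙 X2)
    (S : X2 ⟶ X1)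
    (hS : S = (λ_ X2).inv ≫ (i ⊗ₘ 𝟙 X2) ≫ (α_ A A X2).hom ≫ (𝟙 A ⊗ₘ a2) ≫ (𝟙 A ⊗ₘ σ) ≫ a1) :
    S ≫ f = c • 𝟙 X2 :=
  statement2_general A μ ι i c hindex X1 X2 a1 a2 unit2 assoc2 f hf σ hσ S hS
end

section
/- Let F be a field and C an F-linear abelian monoidal category whose composition and tensor product of morphisms are F-bilinear. Let (A, μ, ι) be an algebra in C satisfying Assumption (*) with index c ≠ 0. If every epimorphism in C splits, then every epimorphism in the category Mod_A of left A-modules splits; that is, Mod_A is semisimple. -/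
/-!
Since `A` is self-dual through the pairing `ε ∘ μ`, the free module `A ⊗ W` is also cofree:
a morphism `φ : X ⟶ W` in `C` out of a module `X` lifts to the module map
`x ↦ Σⱼ eⱼ ⊗ φ(eⱼ^* x) : X ⟶ A ⊗ W` (with `i = Σⱼ eⱼ ⊗ eⱼ^*`), from which `φ` is recovered by
applying `ε` to the first factor. So free modules detect epimorphisms, and an epimorphism
`f` of modules is an epimorphism in `C`. If `σ` is a section of `f` in `C`, the averaged map
`t = Σⱼ eⱼ σ(eⱼ^* x)` is a module map with `f ∘ t = (μ ∘ i) · id = c · id`, so `c⁻¹ t` is a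
section of `f` in `Mod_A`.
-/

open CategoryTheory MonoidalCategory

section Frobenius

variable {C : Type*} [Category C] [MonoidalCategory C]
  {A : C} {μ : A ⊗ A ⟶ A} {ι : 𝟙_ C ⟶ A} {ε : A ⟶ 𝟙_ C} {i : 𝟙_ C ⟶ A ⊗ A}

theorem pairing_invariant (assoc : A ◁ μ ≫ μ = (α_ A A A).inv ≫ μ ▷ A ≫ μ) :
    μ ▷ A ≫ μ ≫ ε = (α_ A A A).hom ≫ A ◁ μ ≫ μ ≫ ε := by
  rw [reassoc_of% assoc]; simp

/-- The copairing `i` commutes with `A`: `Σⱼ eⱼ ⊗ eⱼ^* a = Σⱼ a eⱼ ⊗ eⱼ^*`. -/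
theorem coev_mul_comm (assoc : A ◁ μ ≫ μ = (α_ A A A).inv ≫ μ ▷ A ≫ μ)
    (zig1 : (λ_ A).inv ≫ i ▷ A ≫ (α_ A A A).hom ≫ A ◁ (μ ≫ ε) ≫ (ρ_ A).hom = 𝟙 A)
    (zig2 : (ρ_ A).inv ≫ A ◁ i ≫ (α_ A A A).inv ≫ (μ ≫ ε) ▷ A ≫ (λ_ A).hom = 𝟙 A) :
    (λ_ A).inv ≫ i ▷ A ≫ (α_ A A A).hom ≫ A ◁ μ
      = (ρ_ A).inv ≫ A ◁ i ≫ (α_ A A A).inv ≫ μ ▷ A := by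
  calc (λ_ A).inv ≫ i ▷ A ≫ (α_ A A A).hom ≫ A ◁ μ
      = 𝟙 _ ⊗≫ i ▷ A ⊗≫ A ◁ (μ ≫ (ρ_ A).inv ≫ A ◁ i ≫ (α_ A A A).inv ≫ (μ ≫ ε) ▷ A ≫
          (λ_ A).hom) := by rw [zig2]; monoidal
    _ = 𝟙 _ ⊗≫ i ▷ A ⊗≫ A ◁ (μ ▷ 𝟙_ C ≫ A ◁ i) ⊗≫ A ◁ ((μ ≫ ε) ▷ A) ⊗≫ 𝟙 _ := by
          monoidal
    _ = 𝟙 _ ⊗≫ i ▷ A ⊗≫ A ◁ ((A ⊗ A) ◁ i ≫ μ ▷ (A ⊗ A)) ⊗≫ A ◁ ((μ ≫ ε) ▷ A) ⊗≫ 𝟙 _ := by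
          rw [← whisker_exchange]
    _ = 𝟙 _ ⊗≫ i ▷ A ⊗≫ A ◁ ((A ⊗ A) ◁ i) ⊗≫ A ◁ ((μ ▷ A ≫ μ ≫ ε) ▷ A) ⊗≫ 𝟙 _ := by
          monoidal
    _ = 𝟙 _ ⊗≫ i ▷ A ⊗≫ A ◁ ((A ⊗ A) ◁ i) ⊗≫
          A ◁ (((α_ A A A).hom ≫ A ◁ μ ≫ μ ≫ ε) ▷ A) ⊗≫ 𝟙 _ := by
          rw [pairing_invariant assoc]
    _ = 𝟙 _ ⊗≫ (i ▷ A ≫ (A ⊗ A) ◁ ((ρ_ A).inv ≫ A ◁ i ≫ (α_ A A A).inv ≫ μ ▷ A)) ⊗≫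
          A ◁ ((μ ≫ ε) ▷ A) ⊗≫ 𝟙 _ := by monoidal
    _ = 𝟙 _ ⊗≫ (𝟙_ C ◁ ((ρ_ A).inv ≫ A ◁ i ≫ (α_ A A A).inv ≫ μ ▷ A) ≫ i ▷ (A ⊗ A)) ⊗≫
          A ◁ ((μ ≫ ε) ▷ A) ⊗≫ 𝟙 _ := by rw [whisker_exchange]
    _ = 𝟙 _ ⊗≫ ((ρ_ A).inv ≫ A ◁ i ≫ (α_ A A A).inv ≫ μ ▷ A) ⊗≫
          (((λ_ A).inv ≫ i ▷ A ≫ (α_ A A A).hom ≫ A ◁ (μ ≫ ε) ≫ (ρ_ A).hom) ▷ A) ⊗≫ 𝟙 _ := by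
          monoidal
    _ = (ρ_ A).inv ≫ A ◁ i ≫ (α_ A A A).inv ≫ μ ▷ A := by rw [zig1]; monoidal

theorem coev_counit (unit_left : ι ▷ A ≫ μ = (λ_ A).hom)
    (zig2 : (ρ_ A).inv ≫ A ◁ i ≫ (α_ A A A).inv ≫ (μ ≫ ε) ▷ A ≫ (λ_ A).hom = 𝟙 A) :
    i ≫ ε ▷ A ≫ (λ_ A).hom = ι := by
  symm
  calc ι = ι ≫ (ρ_ A).inv ≫ A ◁ i ≫ (α_ A A A).inv ≫ (μ ≫ ε) ▷ A ≫ (λ_ A).hom := by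
        rw [zig2, Category.comp_id]
    _ = 𝟙 _ ⊗≫ (ι ▷ 𝟙_ C ≫ A ◁ i) ⊗≫ (μ ≫ ε) ▷ A ⊗≫ 𝟙 _ := by monoidal
    _ = 𝟙 _ ⊗≫ (𝟙_ C ◁ i ≫ ι ▷ (A ⊗ A)) ⊗≫ (μ ≫ ε) ▷ A ⊗≫ 𝟙 _ := by
          rw [← whisker_exchange]
    _ = 𝟙 _ ⊗≫ i ⊗≫ ((ι ▷ A ≫ μ ≫ ε) ▷ A) ⊗≫ 𝟙 _ := by monoidal
    _ = i ≫ ε ▷ A ≫ (λ_ A).hom := by rw [reassoc_of% unit_left]; monoidal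

variable (μ) in
def freeAction (Z : C) : A ⊗ (A ⊗ Z) ⟶ A ⊗ Z := (α_ A A Z).inv ≫ μ ▷ Z

theorem freeAction_unit (unit_left : ι ▷ A ≫ μ = (λ_ A).hom) (Z : C) :
    ι ▷ (A ⊗ Z) ≫ freeAction μ Z = (λ_ (A ⊗ Z)).hom := by
  calc ι ▷ (A ⊗ Z) ≫ freeAction μ Z = 𝟙 _ ⊗≫ (ι ▷ A ≫ μ) ▷ Z ⊗≫ 𝟙 _ := by
        unfold freeAction; monoidal
    _ = (λ_ (A ⊗ Z)).hom := by rw [unit_left]; monoidal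

theorem freeAction_assoc (assoc : A ◁ μ ≫ μ = (α_ A A A).inv ≫ μ ▷ A ≫ μ) (Z : C) :
    A ◁ freeAction μ Z ≫ freeAction μ Z
      = (α_ A A (A ⊗ Z)).inv ≫ μ ▷ (A ⊗ Z) ≫ freeAction μ Z := by
  unfold freeAction
  calc A ◁ ((α_ A A Z).inv ≫ μ ▷ Z) ≫ (α_ A A Z).inv ≫ μ ▷ Z
      = 𝟙 _ ⊗≫ ((A ◁ μ ≫ μ) ▷ Z) ⊗≫ 𝟙 _ := by monoidal
    _ = 𝟙 _ ⊗≫ (((α_ A A A).inv ≫ μ ▷ A ≫ μ) ▷ Z) ⊗≫ 𝟙 _ := by rw [assoc]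
    _ = _ := by monoidal

variable (i) in
/-- The lift `x ↦ Σⱼ eⱼ ⊗ φ(eⱼ^* x)` of `φ : X ⟶ W` to a module map into `A ⊗ W`. -/
def cofreeLift {X W : C} (a : A ⊗ X ⟶ X) (φ : X ⟶ W) : X ⟶ A ⊗ W :=
  (λ_ X).inv ≫ i ▷ X ≫ (α_ A A X).hom ≫ A ◁ (a ≫ φ)

theorem cofreeLift_isModHom (assoc : A ◁ μ ≫ μ = (α_ A A A).inv ≫ μ ▷ A ≫ μ)
    (zig1 : (λ_ A).inv ≫ i ▷ A ≫ (α_ A A A).hom ≫ A ◁ (μ ≫ ε) ≫ (ρ_ A).hom = 𝟙 A)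
    (zig2 : (ρ_ A).inv ≫ A ◁ i ≫ (α_ A A A).inv ≫ (μ ≫ ε) ▷ A ≫ (λ_ A).hom = 𝟙 A)
    {X W : C} {a : A ⊗ X ⟶ X} (assoc_a : A ◁ a ≫ a = (α_ A A X).inv ≫ μ ▷ X ≫ a)
    (φ : X ⟶ W) :
    a ≫ cofreeLift i a φ = A ◁ cofreeLift i a φ ≫ freeAction μ W := by
  unfold cofreeLift freeAction
  calc a ≫ (λ_ X).inv ≫ i ▷ X ≫ (α_ A A X).hom ≫ A ◁ (a ≫ φ)
      = 𝟙 _ ⊗≫ (𝟙_ C ◁ a ≫ i ▷ X) ⊗≫ A ◁ (a ≫ φ) ⊗≫ 𝟙 _ := by monoidal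
    _ = 𝟙 _ ⊗≫ (i ▷ (A ⊗ X) ≫ (A ⊗ A) ◁ a) ⊗≫ A ◁ (a ≫ φ) ⊗≫ 𝟙 _ := by
          rw [whisker_exchange]
    _ = 𝟙 _ ⊗≫ i ▷ (A ⊗ X) ⊗≫ A ◁ (A ◁ a ≫ a) ⊗≫ A ◁ φ ⊗≫ 𝟙 _ := by monoidal
    _ = 𝟙 _ ⊗≫ i ▷ (A ⊗ X) ⊗≫ A ◁ ((α_ A A X).inv ≫ μ ▷ X ≫ a) ⊗≫ A ◁ φ ⊗≫ 𝟙 _ := by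
          rw [assoc_a]
    _ = 𝟙 _ ⊗≫ (((λ_ A).inv ≫ i ▷ A ≫ (α_ A A A).hom ≫ A ◁ μ) ▷ X) ⊗≫
          A ◁ (a ≫ φ) ⊗≫ 𝟙 _ := by monoidal
    _ = 𝟙 _ ⊗≫ (((ρ_ A).inv ≫ A ◁ i ≫ (α_ A A A).inv ≫ μ ▷ A) ▷ X) ⊗≫
          A ◁ (a ≫ φ) ⊗≫ 𝟙 _ := by rw [coev_mul_comm assoc zig1 zig2]
    _ = 𝟙 _ ⊗≫ ((A ◁ i) ▷ X) ⊗≫ (μ ▷ (A ⊗ X) ≫ A ◁ (a ≫ φ)) ⊗≫ 𝟙 _ := by monoidal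
    _ = 𝟙 _ ⊗≫ ((A ◁ i) ▷ X) ⊗≫ ((A ⊗ A) ◁ (a ≫ φ) ≫ μ ▷ W) ⊗≫ 𝟙 _ := by
          rw [← whisker_exchange]
    _ = A ◁ ((λ_ X).inv ≫ i ▷ X ≫ (α_ A A X).hom ≫ A ◁ (a ≫ φ)) ≫
          (α_ A A W).inv ≫ μ ▷ W := by monoidal

theorem comp_cofreeLift {X₁ X₂ W : C} {a₁ : A ⊗ X₁ ⟶ X₁} {a₂ : A ⊗ X₂ ⟶ X₂} {f : X₁ ⟶ X₂}
    (hf : a₁ ≫ f = A ◁ f ≫ a₂) (φ : X₂ ⟶ W) :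
    f ≫ cofreeLift i a₂ φ = cofreeLift i a₁ (f ≫ φ) := by
  unfold cofreeLift
  calc f ≫ (λ_ X₂).inv ≫ i ▷ X₂ ≫ (α_ A A X₂).hom ≫ A ◁ (a₂ ≫ φ)
      = 𝟙 _ ⊗≫ (𝟙_ C ◁ f ≫ i ▷ X₂) ⊗≫ A ◁ (a₂ ≫ φ) ⊗≫ 𝟙 _ := by monoidal
    _ = 𝟙 _ ⊗≫ (i ▷ X₁ ≫ (A ⊗ A) ◁ f) ⊗≫ A ◁ (a₂ ≫ φ) ⊗≫ 𝟙 _ := by rw [whisker_exchange]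
    _ = 𝟙 _ ⊗≫ i ▷ X₁ ⊗≫ A ◁ (A ◁ f ≫ a₂ ≫ φ) ⊗≫ 𝟙 _ := by monoidal
    _ = 𝟙 _ ⊗≫ i ▷ X₁ ⊗≫ A ◁ (a₁ ≫ f ≫ φ) ⊗≫ 𝟙 _ := by rw [← reassoc_of% hf]
    _ = (λ_ X₁).inv ≫ i ▷ X₁ ≫ (α_ A A X₁).hom ≫ A ◁ (a₁ ≫ f ≫ φ) := by monoidal

theorem cofreeLift_counit (unit_left : ι ▷ A ≫ μ = (λ_ A).hom)
    (zig2 : (ρ_ A).inv ≫ A ◁ i ≫ (α_ A A A).inv ≫ (μ ≫ ε) ▷ A ≫ (λ_ A).hom = 𝟙 A)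
    {X W : C} {a : A ⊗ X ⟶ X} (unit_a : ι ▷ X ≫ a = (λ_ X).hom) (φ : X ⟶ W) :
    cofreeLift i a φ ≫ ε ▷ W ≫ (λ_ W).hom = φ := by
  unfold cofreeLift
  calc ((λ_ X).inv ≫ i ▷ X ≫ (α_ A A X).hom ≫ A ◁ (a ≫ φ)) ≫ ε ▷ W ≫ (λ_ W).hom
      = 𝟙 _ ⊗≫ i ▷ X ⊗≫ (A ◁ (a ≫ φ) ≫ ε ▷ W) ⊗≫ 𝟙 _ := by monoidal
    _ = 𝟙 _ ⊗≫ i ▷ X ⊗≫ (ε ▷ (A ⊗ X) ≫ 𝟙_ C ◁ (a ≫ φ)) ⊗≫ 𝟙 _ := by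
          rw [whisker_exchange]
    _ = 𝟙 _ ⊗≫ ((i ≫ ε ▷ A ≫ (λ_ A).hom) ▷ X) ⊗≫ a ≫ φ := by monoidal
    _ = (λ_ X).inv ≫ (ι ▷ X ≫ a) ≫ φ := by rw [coev_counit unit_left zig2]; monoidal
    _ = φ := by rw [unit_a]; simp

theorem epi_of_cancel_free (unit_left : ι ▷ A ≫ μ = (λ_ A).hom)
    (assoc : A ◁ μ ≫ μ = (α_ A A A).inv ≫ μ ▷ A ≫ μ)
    (zig1 : (λ_ A).inv ≫ i ▷ A ≫ (α_ A A A).hom ≫ A ◁ (μ ≫ ε) ≫ (ρ_ A).hom = 𝟙 A)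
    (zig2 : (ρ_ A).inv ≫ A ◁ i ≫ (α_ A A A).inv ≫ (μ ≫ ε) ▷ A ≫ (λ_ A).hom = 𝟙 A)
    {X₁ X₂ : C} {a₁ : A ⊗ X₁ ⟶ X₁} {a₂ : A ⊗ X₂ ⟶ X₂}
    (unit₂ : ι ▷ X₂ ≫ a₂ = (λ_ X₂).hom) (assoc₂ : A ◁ a₂ ≫ a₂ = (α_ A A X₂).inv ≫ μ ▷ X₂ ≫ a₂)
    {f : X₁ ⟶ X₂} (hf : a₁ ≫ f = A ◁ f ≫ a₂)
    (hcancel : ∀ (Z : C) (g h : X₂ ⟶ A ⊗ Z), a₂ ≫ g = A ◁ g ≫ freeAction μ Z →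
      a₂ ≫ h = A ◁ h ≫ freeAction μ Z → f ≫ g = f ≫ h → g = h) :
    Epi f where
  left_cancellation {Z} g h w := by
    have hlift : cofreeLift i a₂ g = cofreeLift i a₂ h :=
      hcancel Z _ _ (cofreeLift_isModHom assoc zig1 zig2 assoc₂ g)
        (cofreeLift_isModHom assoc zig1 zig2 assoc₂ h)
        (by rw [comp_cofreeLift hf, comp_cofreeLift hf, w])
    rw [← cofreeLift_counit unit_left zig2 unit₂ g, hlift, cofreeLift_counit unit_left zig2 unit₂ h]

theorem cofreeLift_comp_action_isModHom (assoc : A ◁ μ ≫ μ = (α_ A A A).inv ≫ μ ▷ A ≫ μ)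
    (zig1 : (λ_ A).inv ≫ i ▷ A ≫ (α_ A A A).hom ≫ A ◁ (μ ≫ ε) ≫ (ρ_ A).hom = 𝟙 A)
    (zig2 : (ρ_ A).inv ≫ A ◁ i ≫ (α_ A A A).inv ≫ (μ ≫ ε) ▷ A ≫ (λ_ A).hom = 𝟙 A)
    {X₁ X₂ : C} {a₁ : A ⊗ X₁ ⟶ X₁} {a₂ : A ⊗ X₂ ⟶ X₂}
    (assoc₁ : A ◁ a₁ ≫ a₁ = (α_ A A X₁).inv ≫ μ ▷ X₁ ≫ a₁)
    (assoc₂ : A ◁ a₂ ≫ a₂ = (α_ A A X₂).inv ≫ μ ▷ X₂ ≫ a₂) (σ : X₂ ⟶ X₁) :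
    a₂ ≫ cofreeLift i a₂ σ ≫ a₁ = A ◁ (cofreeLift i a₂ σ ≫ a₁) ≫ a₁ := by
  rw [reassoc_of% cofreeLift_isModHom assoc zig1 zig2 assoc₂ σ, freeAction,
    MonoidalCategory.whiskerLeft_comp_assoc, assoc₁, Category.assoc]

theorem cofreeLift_comp_action_comp {X₁ X₂ : C} {a₁ : A ⊗ X₁ ⟶ X₁} {a₂ : A ⊗ X₂ ⟶ X₂}
    (assoc₂ : A ◁ a₂ ≫ a₂ = (α_ A A X₂).inv ≫ μ ▷ X₂ ≫ a₂)
    {f : X₁ ⟶ X₂} (hf : a₁ ≫ f = A ◁ f ≫ a₂) {σ : X₂ ⟶ X₁} (hσ : σ ≫ f = 𝟙 X₂) :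
    (cofreeLift i a₂ σ ≫ a₁) ≫ f = (λ_ X₂).inv ≫ (i ≫ μ) ▷ X₂ ≫ a₂ := by
  calc (cofreeLift i a₂ σ ≫ a₁) ≫ f
      = (λ_ X₂).inv ≫ i ▷ X₂ ≫ (α_ A A X₂).hom ≫ A ◁ a₂ ≫ a₂ := by
        simp only [cofreeLift, Category.assoc, hf, ← MonoidalCategory.whiskerLeft_comp_assoc, hσ,
          Category.comp_id]
    _ = (λ_ X₂).inv ≫ (i ≫ μ) ▷ X₂ ≫ a₂ := by
        rw [assoc₂, Iso.hom_inv_id_assoc, comp_whiskerRight, Category.assoc]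

end Frobenius

theorem statement3_general {F : Type*} [Field F] {C : Type*} [Category C] [Abelian C]
    [CategoryTheory.Linear F C] [MonoidalCategory C] [MonoidalPreadditive C]
    [MonoidalLinear F C]
    (A : C) (μ : A ⊗ A ⟶ A) (ι : 𝟙_ C ⟶ A)
    (unit_left : (ι ⊗ₘ 𝟙 A) ≫ μ = (λ_ A).hom)
    (assoc : (𝟙 A ⊗ₘ μ) ≫ μ = (α_ A A A).inv ≫ (μ ⊗ₘ 𝟙 A) ≫ μ)
    -- Assumption (*) part (1)
    (ε : A ⟶ 𝟙_ C)
    -- Assumption (*) part (2)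
    (i : 𝟙_ C ⟶ A ⊗ A)
    (zig1 : (λ_ A).inv ≫ (i ⊗ₘ 𝟙 A) ≫ (α_ A A A).hom ≫ (𝟙 A ⊗ₘ (μ ≫ ε)) ≫ (ρ_ A).hom = 𝟙 A)
    (zig2 : (ρ_ A).inv ≫ (𝟙 A ⊗ₘ i) ≫ (α_ A A A).inv ≫ ((μ ≫ ε) ⊗ₘ 𝟙 A) ≫ (λ_ A).hom = 𝟙 A)
    -- Assumption (*) part (3): non-zero index
    (c : F) (hc : c ≠ 0) (hindex : i ≫ μ = c • ι)
    -- C is semisimple: every epimorphism in C splits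
    (hC : ∀ {W1 W2 : C} (f : W1 ⟶ W2), Epi f → ∃ σ : W2 ⟶ W1, σ ≫ f = 𝟙 W2)
    -- an epimorphism in Mod_A:
    (X1 X2 : C) (a1 : A ⊗ X1 ⟶ X1) (a2 : A ⊗ X2 ⟶ X2)
    (assoc1 : (𝟙 A ⊗ₘ a1) ≫ a1 = (α_ A A X1).inv ≫ (μ ⊗ₘ 𝟙 X1) ≫ a1)
    (unit2 : (ι ⊗ₘ 𝟙 X2) ≫ a2 = (λ_ X2).hom)
    (assoc2 : (𝟙 A ⊗ₘ a2) ≫ a2 = (α_ A A X2).inv ≫ (μ ⊗ₘ 𝟙 X2) ≫ a2)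
    (f : X1 ⟶ X2) (hf : a1 ≫ f = (𝟙 A ⊗ₘ f) ≫ a2)
    (hepi : ∀ (X3 : C) (a3 : A ⊗ X3 ⟶ X3),
      (ι ⊗ₘ 𝟙 X3) ≫ a3 = (λ_ X3).hom →
      (𝟙 A ⊗ₘ a3) ≫ a3 = (α_ A A X3).inv ≫ (μ ⊗ₘ 𝟙 X3) ≫ a3 →
      ∀ (g h : X2 ⟶ X3), a2 ≫ g = (𝟙 A ⊗ₘ g) ≫ a3 → a2 ≫ h = (𝟙 A ⊗ₘ h) ≫ a3 →
        f ≫ g = f ≫ h → g = h) :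
    ∃ s : X2 ⟶ X1, a2 ≫ s = (𝟙 A ⊗ₘ s) ≫ a1 ∧ s ≫ f = 𝟙 X2 := by
  simp only [id_tensorHom, tensorHom_id] at unit_left assoc zig1 zig2 assoc1 unit2 assoc2 hf hepi ⊢
  have hEpi : Epi f := epi_of_cancel_free unit_left assoc zig1 zig2 unit2 assoc2 hf
    fun Z ↦ hepi (A ⊗ Z) _ (freeAction_unit unit_left Z) (freeAction_assoc assoc Z)
  obtain ⟨σ, hσ⟩ := hC f hEpi
  have hsection : (cofreeLift i a2 σ ≫ a1) ≫ f = c • 𝟙 X2 := by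
    rw [cofreeLift_comp_action_comp assoc2 hf hσ, hindex, MonoidalLinear.smul_whiskerRight,
      Linear.smul_comp, Linear.comp_smul, unit2, Iso.inv_hom_id]
  refine ⟨c⁻¹ • (cofreeLift i a2 σ ≫ a1), ?_, ?_⟩
  · rw [Linear.comp_smul, MonoidalLinear.whiskerLeft_smul, Linear.smul_comp,
      cofreeLift_comp_action_isModHom assoc zig1 zig2 assoc1 assoc2]
  · rw [Linear.smul_comp, hsection, smul_smul, inv_mul_cancel₀ hc, one_smul]

/-- Let `C` be an `F`-linear abelian monoidal category and `(A, μ, ι)` an algebra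
in `C` satisfying Assumption (*) with index `c ≠ 0`. If every epimorphism in `C` splits, then
every epimorphism in the category `Mod_A` of left `A`-modules splits (i.e. `Mod_A` is
semisimple). An epimorphism in `Mod_A` is a module morphism `f : X1 ⟶ X2` such that any two
module morphisms out of `X2` agreeing after composition with `f` are equal, and a splitting is
a module morphism section. -/
theorem statement3 {F : Type*} [Field F] {C : Type*} [Category C] [Abelian C]
    [CategoryTheory.Linear F C] [MonoidalCategory C] [MonoidalPreadditive C]
    [MonoidalLinear F C]
    (A : C) (μ : A ⊗ A ⟶ A) (ι : 𝟙_ C ⟶ A)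
    (unit_left : (ι ⊗ₘ 𝟙 A) ≫ μ = (λ_ A).hom)
    (unit_right : (𝟙 A ⊗ₘ ι) ≫ μ = (ρ_ A).hom)
    (assoc : (𝟙 A ⊗ₘ μ) ≫ μ = (α_ A A A).inv ≫ (μ ⊗ₘ 𝟙 A) ≫ μ)
    -- Assumption (*) part (1)
    (ε : A ⟶ 𝟙_ C) (hει : ι ≫ ε = 𝟙 (𝟙_ C))
    -- Assumption (*) part (2)
    (i : 𝟙_ C ⟶ A ⊗ A)
    (zig1 : (λ_ A).inv ≫ (i ⊗ₘ 𝟙 A) ≫ (α_ A A A).hom ≫ (𝟙 A ⊗ₘ (μ ≫ ε)) ≫ (ρ_ A).hom = 𝟙 A)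
    (zig2 : (ρ_ A).inv ≫ (𝟙 A ⊗ₘ i) ≫ (α_ A A A).inv ≫ ((μ ≫ ε) ⊗ₘ 𝟙 A) ≫ (λ_ A).hom = 𝟙 A)
    -- Assumption (*) part (3): non-zero index
    (c : F) (hc : c ≠ 0) (hindex : i ≫ μ = c • ι)
    -- C is semisimple: every epimorphism in C splits
    (hC : ∀ {W1 W2 : C} (f : W1 ⟶ W2), Epi f → ∃ σ : W2 ⟶ W1, σ ≫ f = 𝟙 W2)
    -- an epimorphism in Mod_A:
    (X1 X2 : C) (a1 : A ⊗ X1 ⟶ X1) (a2 : A ⊗ X2 ⟶ X2)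
    (unit1 : (ι ⊗ₘ 𝟙 X1) ≫ a1 = (λ_ X1).hom)
    (assoc1 : (𝟙 A ⊗ₘ a1) ≫ a1 = (α_ A A X1).inv ≫ (μ ⊗ₘ 𝟙 X1) ≫ a1)
    (unit2 : (ι ⊗ₘ 𝟙 X2) ≫ a2 = (λ_ X2).hom)
    (assoc2 : (𝟙 A ⊗ₘ a2) ≫ a2 = (α_ A A X2).inv ≫ (μ ⊗ₘ 𝟙 X2) ≫ a2)
    (f : X1 ⟶ X2) (hf : a1 ≫ f = (𝟙 A ⊗ₘ f) ≫ a2)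
    (hepi : ∀ (X3 : C) (a3 : A ⊗ X3 ⟶ X3),
      (ι ⊗ₘ 𝟙 X3) ≫ a3 = (λ_ X3).hom →
      (𝟙 A ⊗ₘ a3) ≫ a3 = (α_ A A X3).inv ≫ (μ ⊗ₘ 𝟙 X3) ≫ a3 →
      ∀ (g h : X2 ⟶ X3), a2 ≫ g = (𝟙 A ⊗ₘ g) ≫ a3 → a2 ≫ h = (𝟙 A ⊗ₘ h) ≫ a3 →
        f ≫ g = f ≫ h → g = h) :
    ∃ s : X2 ⟶ X1, a2 ≫ s = (𝟙 A ⊗ₘ s) ≫ a1 ∧ s ≫ f = 𝟙 X2 :=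
  statement3_general A μ ι unit_left assoc ε i zig1 zig2 c hc hindex hC X1 X2 a1 a2 assoc1 unit2
    assoc2 f hf hepi
end

section
/- Let C be a monoidal category whose unit object 𝟙 is projective with respect to epimorphisms. Let W2 be an object of C admitting a right dual W2* (with evaluation e : W2* ⊗ W2 → 𝟙 and coevaluation i : 𝟙 → W2 ⊗ W2* satisfying the zig-zag identities), and suppose the functor − ⊗ W2* preserves epimorphisms (as holds, in particular, when W2* itself has a right dual). Then every epimorphism f : W1 → W2 in C splits: there exists σ : W2 → W1 with f ∘ σ = id_{W2}. -/
/-!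
Lift the coevaluation `i : 𝟙 ⟶ W2 ⊗ W2*` through the epimorphism `f ▷ W2*` using projectivity
of `𝟙`, and turn the lift back into a morphism `W2 ⟶ W1` with the evaluation. By naturality this
transport commutes with `f`, and the zig-zag identity says that it sends `i` to `𝟙 W2`.
-/

open CategoryTheory MonoidalCategory

namespace CategoryTheory.MonoidalCategory

variable {C : Type*} [Category C] [MonoidalCategory C] {X X' Y Z : C}

def evalMate (e : Z ⊗ Y ⟶ 𝟙_ C) (h : 𝟙_ C ⟶ X ⊗ Z) : Y ⟶ X :=
  (λ_ Y).inv ≫ h ▷ Y ≫ (α_ X Z Y).hom ≫ X ◁ e ≫ (ρ_ X).hom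

lemma evalMate_comp (e : Z ⊗ Y ⟶ 𝟙_ C) (h : 𝟙_ C ⟶ X ⊗ Z) (f : X ⟶ X') :
    evalMate e h ≫ f = evalMate e (h ≫ f ▷ Z) := by
  simp only [evalMate, Category.assoc, comp_whiskerRight, associator_naturality_left_assoc,
    ← whisker_exchange_assoc, rightUnitor_naturality]

lemma exists_comp_eq_id_of_lift_coevaluation (e : Z ⊗ Y ⟶ 𝟙_ C) (i : 𝟙_ C ⟶ Y ⊗ Z)
    (zig : (λ_ Y).inv ≫ (i ⊗ₘ 𝟙 Y) ≫ (α_ Y Z Y).hom ≫ (𝟙 Y ⊗ₘ e) ≫ (ρ_ Y).hom = 𝟙 Y)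
    (f : X ⟶ Y) (h : 𝟙_ C ⟶ X ⊗ Z) (hh : h ≫ f ▷ Z = i) :
    ∃ σ : Y ⟶ X, σ ≫ f = 𝟙 Y :=
  ⟨evalMate e h, by
    rw [evalMate_comp, hh, ← zig, evalMate, tensorHom_id, id_tensorHom]⟩

end CategoryTheory.MonoidalCategory

theorem statement8_general {C : Type*} [Category C] [MonoidalCategory C]
    (hproj : ∀ {W1 W2 : C} (f : W1 ⟶ W2), Epi f → ∀ (g : 𝟙_ C ⟶ W2),
      ∃ h : 𝟙_ C ⟶ W1, h ≫ f = g)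
    (W2 Wd : C) (e : Wd ⊗ W2 ⟶ 𝟙_ C) (i : 𝟙_ C ⟶ W2 ⊗ Wd)
    (zig1 : (λ_ W2).inv ≫ (i ⊗ₘ 𝟙 W2) ≫ (α_ W2 Wd W2).hom ≫ (𝟙 W2 ⊗ₘ e) ≫ (ρ_ W2).hom = 𝟙 W2)
    (hWd : ∀ {X Y : C} (g : X ⟶ Y), Epi g → Epi (g ⊗ₘ 𝟙 Wd)) :
    ∀ (W1 : C) (f : W1 ⟶ W2), Epi f → ∃ σ : W2 ⟶ W1, σ ≫ f = 𝟙 W2 := by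
  intro W1 f hf
  obtain ⟨h, hh⟩ := hproj (f ⊗ₘ 𝟙 Wd) (hWd f hf) i
  rw [tensorHom_id] at hh
  exact exists_comp_eq_id_of_lift_coevaluation e i zig1 f h hh

/-- Let `C` be a monoidal category whose unit object is projective with respect to
epimorphisms. If `W2` has a right dual `Wd` (evaluation `e`, coevaluation `i`, zig-zag
identities) and `− ⊗ Wd` preserves epimorphisms, then every epimorphism `f : W1 ⟶ W2` splits. -/
theorem statement8 {C : Type*} [Category C] [MonoidalCategory C]
    (hproj : ∀ {W1 W2 : C} (f : W1 ⟶ W2), Epi f → ∀ (g : 𝟙_ C ⟶ W2),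
      ∃ h : 𝟙_ C ⟶ W1, h ≫ f = g)
    (W2 Wd : C) (e : Wd ⊗ W2 ⟶ 𝟙_ C) (i : 𝟙_ C ⟶ W2 ⊗ Wd)
    (zig1 : (λ_ W2).inv ≫ (i ⊗ₘ 𝟙 W2) ≫ (α_ W2 Wd W2).hom ≫ (𝟙 W2 ⊗ₘ e) ≫ (ρ_ W2).hom = 𝟙 W2)
    (zig2 : (ρ_ Wd).inv ≫ (𝟙 Wd ⊗ₘ i) ≫ (α_ Wd W2 Wd).inv ≫ (e ⊗ₘ 𝟙 Wd) ≫ (λ_ Wd).hom = 𝟙 Wd)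
    (hWd : ∀ {X Y : C} (g : X ⟶ Y), Epi g → Epi (g ⊗ₘ 𝟙 Wd)) :
    ∀ (W1 : C) (f : W1 ⟶ W2), Epi f → ∃ σ : W2 ⟶ W1, σ ≫ f = 𝟙 W2 :=
  statement8_general hproj W2 Wd e i zig1 hWd
end

section
/- Let C be a monoidal category in which every object has a left dual and a right dual (C is rigid) and whose unit object 𝟙 is projective with respect to epimorphisms. Then every epimorphism in C splits; that is, C is semisimple. -/
/-!
Tensoring on the right with an object that has a right dual is a left adjoint, so for an
epimorphism `f : X ⟶ Y` the morphism `f ▷ Yᘁ` is again epi. Projectivity of `𝟙_ C` lifts the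
coevaluation `𝟙_ C ⟶ Y ⊗ Yᘁ` along `f ▷ Yᘁ`, and by the zig-zag identity the mate `Y ⟶ X` of
such a lift is a section of `f`.
-/

open CategoryTheory MonoidalCategory

namespace CategoryTheory

variable {C : Type*} [Category C] [MonoidalCategory C]

theorem epi_whiskerRight_of_exactPairing {X X' : C} (f : X ⟶ X') [Epi f] (Y Y' : C)
    [ExactPairing Y Y'] : Epi (f ▷ Y) :=
  have := (tensorRightAdjunction Y Y').isLeftAdjoint
  (tensorRight Y).map_epi f

theorem isSplitEpi_of_coevaluation_factors {X Y Y' : C} [ExactPairing Y Y'] (f : X ⟶ Y)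
    (h : 𝟙_ C ⟶ X ⊗ Y') (hh : h ≫ f ▷ Y' = η_ Y Y') : IsSplitEpi f := by
  refine IsSplitEpi.mk' ⟨(λ_ Y).inv ≫ (tensorRightHomEquiv _ Y Y' X).symm h, ?_⟩
  have hmate : (tensorRightHomEquiv _ Y Y' X).symm h ≫ f = (λ_ Y).hom := by
    rw [← (tensorRightHomEquiv _ Y Y' Y).symm_apply_apply (_ ≫ f), tensorRightHomEquiv_naturality,
      Equiv.apply_symm_apply, hh]
    simpa using tensorRightHomEquiv_symm_coevaluation_comp_whiskerRight (Y' := Y') (𝟙 Y)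
  rw [Category.assoc, hmate, Iso.inv_hom_id]

end CategoryTheory

/-- In a rigid monoidal category whose unit object is projective with respect to
epimorphisms, every epimorphism splits; that is, the category is semisimple. -/
theorem statement11 {C : Type*} [Category C] [MonoidalCategory C] [RigidCategory C]
    (hproj : ∀ {W1 W2 : C} (f : W1 ⟶ W2), Epi f → ∀ (g : 𝟙_ C ⟶ W2),
      ∃ h : 𝟙_ C ⟶ W1, h ≫ f = g) :
    ∀ {W1 W2 : C} (f : W1 ⟶ W2), Epi f → ∃ σ : W2 ⟶ W1, σ ≫ f = 𝟙 W2 := by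
  intro W1 W2 f hf
  have hepi : Epi (f ▷ (W2ᘁ : C)) := epi_whiskerRight_of_exactPairing f _ ((W2ᘁ : C)ᘁ)
  obtain ⟨h, hh⟩ := hproj (f ▷ (W2ᘁ : C)) hepi (η_ W2 (W2ᘁ : C))
  have := isSplitEpi_of_coevaluation_factors f h hh
  exact ⟨section_ f, IsSplitEpi.id f⟩
end
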